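/- Let A₁ = ℚ[k₁, k₂, γ₂, η]/(η² − (2k₂ + k₁²)(4γ₂ − k₁²)), let B = ℚ[k₁, k₂, η]/(η² + (2k₂ + k₁²)k₁²), and let C = ℚ[k₁, k₂]. Let p : A₁ → B be the ring homomorphism induced by k₁ ↦ k₁, k₂ ↦ k₂, η ↦ η, γ₂ ↦ 0, and let q : C → B be the homomorphism induced by the inclusion ℚ[k₁, k₂] ⊆ ℚ[k₁, k₂, η]. Then the ℚ-algebra homomorphism from ℚ[K₁, K₂, G, Q] to the fiber product A₁ ×_B C (taken along p and q) determined by K₁ ↦ (k₁, k₁), K₂ ↦ (k₂, k₂), G ↦ (γ₂, 0), Q ↦ (γ₂·η, 0) (classes denoting images in the respective quotients) is surjective with kernel the principal ideal generated by Q² + G²(2K₂ + K₁²)(K₁² − 4G); hence A₁ ×_B C ≅ ℚ[K₁, K₂, G, Q]/(Q² + G²(2K₂ + K₁²)(K₁² − 4G)). -/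

import Mathlib

/-!
Write `ℚ[k₁, k₂, γ₂, η] = R[η]` with `R = ℚ[k₁, k₂, γ₂]`, and likewise `ℚ[K₁, K₂, G, Q] = R[Q]` and
`ℚ[k₁, k₂, η] = ℚ[k₁, k₂][η]`. Each of the three relations is a monic quadratic without linear term in
the last variable, so modulo it every element is `v · last + u` with `u`, `v` free of the last
variable, and such an element is divisible by the relation only if `u = v = 0`.

The first component of `Φ` sends `v Q + u` to the class of `(G v) η + u` in `A₁`, which vanishes only
for `u = v = 0`; hence the kernel is generated by the relation of the fiber product. An element
`(v η + u, c)` of `A₁ × C` lies in the fiber product iff `u|_{γ₂ = 0} = c` and `v|_{γ₂ = 0} = 0`, i.e.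
`v = γ₂ w`, and then `w Q + u` is a preimage.
-/

open MvPolynomial

namespace Stmt7

/-- The relation of `A₁ = ℚ[k₁, k₂, γ₂, η]/(η² − (2k₂ + k₁²)(4γ₂ − k₁²))`,
with `k₁ = X 0`, `k₂ = X 1`, `γ₂ = X 2`, `η = X 3`. -/
noncomputable def relA : MvPolynomial (Fin 4) ℚ :=
  X 3 ^ 2 - (2 * X 1 + X 0 ^ 2) * (4 * X 2 - X 0 ^ 2)

/-- The relation of `B = ℚ[k₁, k₂, η]/(η² + (2k₂ + k₁²)k₁²)`,
with `k₁ = X 0`, `k₂ = X 1`, `η = X 2`. -/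
noncomputable def relB : MvPolynomial (Fin 3) ℚ :=
  X 2 ^ 2 + (2 * X 1 + X 0 ^ 2) * X 0 ^ 2

/-- `A₁ = ℚ[k₁, k₂, γ₂, η]/(η² − (2k₂ + k₁²)(4γ₂ − k₁²))`. -/
abbrev A1 : Type := MvPolynomial (Fin 4) ℚ ⧸ Ideal.span {relA}

/-- `B = ℚ[k₁, k₂, η]/(η² + (2k₂ + k₁²)k₁²)`. -/
abbrev B : Type := MvPolynomial (Fin 3) ℚ ⧸ Ideal.span {relB}

/-- `C = ℚ[k₁, k₂]`. -/
abbrev C : Type := MvPolynomial (Fin 2) ℚ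

noncomputable def mkA : MvPolynomial (Fin 4) ℚ →ₐ[ℚ] A1 :=
  Ideal.Quotient.mkₐ ℚ (Ideal.span {relA})

noncomputable def mkB : MvPolynomial (Fin 3) ℚ →ₐ[ℚ] B :=
  Ideal.Quotient.mkₐ ℚ (Ideal.span {relB})

lemma aux_p : ∀ x ∈ Ideal.span {relA},
    (mkB.comp (aeval ![X 0, X 1, 0, X 2])) x = 0 := by
  intro x hx
  obtain ⟨c, rfl⟩ := Ideal.mem_span_singleton'.mp hx
  rw [map_mul]
  have h1 : (aeval ![X 0, X 1, 0, X 2] :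
      MvPolynomial (Fin 4) ℚ →ₐ[ℚ] MvPolynomial (Fin 3) ℚ) relA = relB := by
    simp only [relA, relB, map_sub, map_add, map_mul, map_pow, map_ofNat, aeval_X]
    simp only [Matrix.cons_val_zero, Matrix.cons_val_one, Matrix.cons_val_two,
      Matrix.cons_val_three, Matrix.head_cons, Matrix.tail_cons]
    ring
  have h2 : (mkB.comp (aeval ![X 0, X 1, 0, X 2])) relA = 0 := by
    rw [AlgHom.comp_apply, h1, mkB, Ideal.Quotient.mkₐ_eq_mk,
      Ideal.Quotient.eq_zero_iff_mem]
    exact Ideal.subset_span rfl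
  rw [h2, mul_zero]

/-- `p : A₁ → B`, induced by `k₁ ↦ k₁`, `k₂ ↦ k₂`, `η ↦ η`, `γ₂ ↦ 0`. -/
noncomputable def p : A1 →ₐ[ℚ] B :=
  Ideal.Quotient.liftₐ (Ideal.span {relA}) (mkB.comp (aeval ![X 0, X 1, 0, X 2])) aux_p

/-- `q : C → B`, induced by the inclusion `ℚ[k₁, k₂] ⊆ ℚ[k₁, k₂, η]`. -/
noncomputable def q : C →ₐ[ℚ] B :=
  mkB.comp (aeval ![X 0, X 1])

/-- The fiber product `A₁ ×_B C` along `p` and `q`, as a subring of `A₁ × C`. -/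
noncomputable def F : Subring (A1 × C) :=
  (p.toRingHom.comp (RingHom.fst A1 C)).eqLocus (q.toRingHom.comp (RingHom.snd A1 C))

/-- The ℚ-algebra homomorphism `ℚ[K₁, K₂, G, Q] → A₁ × C` determined by
`K₁ ↦ (k₁, k₁)`, `K₂ ↦ (k₂, k₂)`, `G ↦ (γ₂, 0)`, `Q ↦ (γ₂·η, 0)`
(with `K₁ = X 0`, `K₂ = X 1`, `G = X 2`, `Q = X 3`). -/
noncomputable def Φ : MvPolynomial (Fin 4) ℚ →ₐ[ℚ] A1 × C :=
  aeval ![(mkA (X 0), X 0), (mkA (X 1), X 1), (mkA (X 2), 0), (mkA (X 2 * X 3), 0)]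

end Stmt7

namespace Polynomial

variable {R : Type*} [CommRing R] [Nontrivial R] {p : R[X]}

lemma exists_eq_mul_add_linear (hp : p.Monic) (hdeg : p.natDegree = 2) (f : R[X]) :
    ∃ h u v, f = p * h + (C v * X + C u) := by
  have hlt : (f %ₘ p).degree < 2 := by
    simpa [degree_eq_natDegree hp.ne_zero, hdeg] using degree_modByMonic_lt f hp
  refine ⟨f /ₘ p, (f %ₘ p).coeff 0, (f %ₘ p).coeff 1, ?_⟩
  rw [← eq_X_add_C_of_degree_le_one (Order.le_of_lt_succ hlt), add_comm, modByMonic_add_div]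

lemma eq_zero_of_dvd_linear (hp : p.Monic) (hdeg : p.natDegree = 2) {u v : R}
    (h : p ∣ C v * X + C u) : u = 0 ∧ v = 0 := by
  have hlt : (C v * X + C u).degree < p.degree := by
    rw [degree_eq_natDegree hp.ne_zero, hdeg]
    exact degree_linear_le.trans_lt (by norm_num)
  have h0 : C v * X + C u = 0 := by
    rw [← (modByMonic_eq_zero_iff_dvd hp).mpr h, (modByMonic_eq_self_iff hp).mpr hlt]
  exact ⟨by simpa using congrArg (coeff · 0) h0, by simpa using congrArg (coeff · 1) h0⟩

end Polynomial

namespace MvPolynomial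

section CommSemiring

variable (R : Type*) [CommSemiring R] (n : ℕ)

noncomputable def lastEquiv :
    MvPolynomial (Fin (n + 1)) R ≃ₐ[R] Polynomial (MvPolynomial (Fin n) R) :=
  (renameEquiv R (finRotate (n + 1))).trans (finSuccEquiv R n)

noncomputable def zeroLast : MvPolynomial (Fin (n + 1)) R →ₐ[R] MvPolynomial (Fin n) R :=
  aeval (Fin.snoc (α := fun _ => MvPolynomial (Fin n) R) X 0)

variable {R n}

@[simp]
lemma lastEquiv_X_last : lastEquiv R n (X (Fin.last n)) = Polynomial.X := by
  simp [lastEquiv, finSuccEquiv_X_zero]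

@[simp]
lemma lastEquiv_X_castSucc (i : Fin n) : lastEquiv R n (X i.castSucc) = Polynomial.C (X i) := by
  simp [lastEquiv, finSuccEquiv_X_succ]

@[simp]
lemma lastEquiv_rename_castSucc (u : MvPolynomial (Fin n) R) :
    lastEquiv R n (rename Fin.castSucc u) = Polynomial.C u := by
  induction u using MvPolynomial.induction_on with
  | C a => simpa [← algebraMap_eq] using (lastEquiv R n).commutes a
  | add f g hf hg => simp [hf, hg]
  | mul_X f i hf => simp [hf]

lemma zeroLast_eq_eval_lastEquiv (v : MvPolynomial (Fin (n + 1)) R) :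
    zeroLast R n v = (lastEquiv R n v).eval 0 := by
  suffices zeroLast R n = ((Polynomial.aeval 0).restrictScalars R).comp (lastEquiv R n).toAlgHom by
    simp [this, Polynomial.eval]
  refine algHom_ext fun i => ?_
  induction i using Fin.lastCases <;> simp [zeroLast]

lemma X_last_dvd_of_zeroLast_eq_zero {v : MvPolynomial (Fin (n + 1)) R}
    (hv : zeroLast R n v = 0) : X (Fin.last n) ∣ v := by
  rw [← map_dvd_iff (lastEquiv R n), lastEquiv_X_last, Polynomial.X_dvd_iff,
    Polynomial.coeff_zero_eq_eval_zero, ← zeroLast_eq_eval_lastEquiv, hv]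

end CommSemiring

variable {R : Type*} [CommRing R] [Nontrivial R] {n : ℕ} {t : MvPolynomial (Fin (n + 1)) R}
  {w : MvPolynomial (Fin n) R}

lemma exists_eq_mul_add_linear_last
    (ht : lastEquiv R n t = Polynomial.X ^ 2 + Polynomial.C w) (z : MvPolynomial (Fin (n + 1)) R) :
    ∃ h u v, z = t * h + (rename Fin.castSucc v * X (Fin.last n) + rename Fin.castSucc u) := by
  obtain ⟨h, u, v, hz⟩ := Polynomial.exists_eq_mul_add_linear
    (ht ▸ Polynomial.monic_X_pow_add_C w two_ne_zero) (ht ▸ Polynomial.natDegree_X_pow_add_C)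
    (lastEquiv R n z)
  refine ⟨(lastEquiv R n).symm h, u, v, (lastEquiv R n).injective ?_⟩
  simpa [ht] using hz

lemma eq_zero_of_dvd_linear_last
    (ht : lastEquiv R n t = Polynomial.X ^ 2 + Polynomial.C w) {u v : MvPolynomial (Fin n) R}
    (h : t ∣ rename Fin.castSucc v * X (Fin.last n) + rename Fin.castSucc u) : u = 0 ∧ v = 0 := by
  refine Polynomial.eq_zero_of_dvd_linear (ht ▸ Polynomial.monic_X_pow_add_C w two_ne_zero)
    (ht ▸ Polynomial.natDegree_X_pow_add_C) ?_
  simpa using map_dvd (lastEquiv R n) h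

end MvPolynomial

namespace Stmt7

noncomputable def relF : MvPolynomial (Fin 4) ℚ :=
  X 3 ^ 2 + X 2 ^ 2 * (2 * X 1 + X 0 ^ 2) * (X 0 ^ 2 - 4 * X 2)

lemma lastEquiv_relA : lastEquiv ℚ 3 relA =
    Polynomial.X ^ 2 + Polynomial.C (-((2 * X 1 + X 0 ^ 2) * (4 * X 2 - X 0 ^ 2))) := by
  have h0 : lastEquiv ℚ 3 (X 0) = Polynomial.C (X 0) := lastEquiv_X_castSucc 0
  have h1 : lastEquiv ℚ 3 (X 1) = Polynomial.C (X 1) := lastEquiv_X_castSucc 1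
  have h2 : lastEquiv ℚ 3 (X 2) = Polynomial.C (X 2) := lastEquiv_X_castSucc 2
  have h3 : lastEquiv ℚ 3 (X 3) = Polynomial.X := lastEquiv_X_last
  simp only [relA, map_sub, map_add, map_mul, map_pow, map_ofNat, map_neg, h0, h1, h2, h3]
  ring

lemma lastEquiv_relB : lastEquiv ℚ 2 relB =
    Polynomial.X ^ 2 + Polynomial.C ((2 * X 1 + X 0 ^ 2) * X 0 ^ 2) := by
  have h0 : lastEquiv ℚ 2 (X 0) = Polynomial.C (X 0) := lastEquiv_X_castSucc 0
  have h1 : lastEquiv ℚ 2 (X 1) = Polynomial.C (X 1) := lastEquiv_X_castSucc 1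
  have h2 : lastEquiv ℚ 2 (X 2) = Polynomial.X := lastEquiv_X_last
  simp [relB, h0, h1, h2, map_ofNat]

lemma lastEquiv_relF : lastEquiv ℚ 3 relF =
    Polynomial.X ^ 2 + Polynomial.C (X 2 ^ 2 * (2 * X 1 + X 0 ^ 2) * (X 0 ^ 2 - 4 * X 2)) := by
  have h0 : lastEquiv ℚ 3 (X 0) = Polynomial.C (X 0) := lastEquiv_X_castSucc 0
  have h1 : lastEquiv ℚ 3 (X 1) = Polynomial.C (X 1) := lastEquiv_X_castSucc 1
  have h2 : lastEquiv ℚ 3 (X 2) = Polynomial.C (X 2) := lastEquiv_X_castSucc 2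
  have h3 : lastEquiv ℚ 3 (X 3) = Polynomial.X := lastEquiv_X_last
  simp [relF, h0, h1, h2, h3, map_ofNat]

lemma mkA_eq_zero_iff {z : MvPolynomial (Fin 4) ℚ} : mkA z = 0 ↔ relA ∣ z := by
  rw [mkA, Ideal.Quotient.mkₐ_eq_mk, Ideal.Quotient.eq_zero_iff_mem, Ideal.mem_span_singleton]

lemma mkB_eq_zero_iff {z : MvPolynomial (Fin 3) ℚ} : mkB z = 0 ↔ relB ∣ z := by
  rw [mkB, Ideal.Quotient.mkₐ_eq_mk, Ideal.Quotient.eq_zero_iff_mem, Ideal.mem_span_singleton]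

lemma q_apply (c : C) : q c = mkB (rename Fin.castSucc c) := by
  suffices (aeval ![X 0, X 1] : C →ₐ[ℚ] _) = rename Fin.castSucc by simp [q, this]
  refine algHom_ext fun i => ?_
  fin_cases i <;> simp

lemma p_mkA (z : MvPolynomial (Fin 4) ℚ) : p (mkA z) = mkB (aeval ![X 0, X 1, 0, X 2] z) :=
  rfl

lemma p_mkA_linear (u v : MvPolynomial (Fin 3) ℚ) :
    p (mkA (rename Fin.castSucc v * X 3 + rename Fin.castSucc u)) =
      mkB (rename Fin.castSucc (zeroLast ℚ 2 v) * X 2 + rename Fin.castSucc (zeroLast ℚ 2 u)) := by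
  have h : (aeval ![X 0, X 1, 0, X 2]).comp (rename Fin.castSucc) =
      (rename Fin.castSucc).comp (zeroLast ℚ 2) := by
    refine algHom_ext fun i => ?_
    fin_cases i <;> simp [zeroLast, Fin.snoc]
  rw [p_mkA]
  simp only [map_add, map_mul, ← AlgHom.comp_apply, h]
  simp

lemma Φ_linear (u v : MvPolynomial (Fin 3) ℚ) :
    Φ (rename Fin.castSucc v * X 3 + rename Fin.castSucc u) =
      (mkA (rename Fin.castSucc (v * X 2) * X 3 + rename Fin.castSucc u), zeroLast ℚ 2 u) := by
  have h : Φ.comp (rename Fin.castSucc) =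
      (mkA.comp (rename Fin.castSucc)).prod (zeroLast ℚ 2) := by
    refine algHom_ext fun i => ?_
    fin_cases i <;> simp [Φ, zeroLast, Fin.snoc]
  simp only [map_add, map_mul, ← AlgHom.comp_apply, h]
  simp [Φ, mul_assoc]

lemma Φ_relF : Φ relF = 0 := by
  have hA : mkA relA = 0 := mkA_eq_zero_iff.2 dvd_rfl
  simp only [relA, map_sub, map_add, map_mul, map_pow, map_ofNat] at hA
  refine Prod.ext ?_ (by simp [Φ, relF])
  simp only [Φ, relF, map_add, map_sub, map_mul, map_pow, aeval_X, aeval_ofNat, Matrix.cons_val,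
    Matrix.cons_val_zero, Matrix.cons_val_one, Prod.fst_add, Prod.fst_sub, Prod.fst_mul,
    Prod.fst_ofNat, Prod.pow_mk, Prod.fst_zero]
  linear_combination mkA (X 2) ^ 2 * hA

lemma range_Φ_le : Φ.toRingHom.range ≤ F := by
  rintro _ ⟨P, rfl⟩
  change p (Φ P).1 = q (Φ P).2
  suffices p.comp ((AlgHom.fst ℚ A1 C).comp Φ) = q.comp ((AlgHom.snd ℚ A1 C).comp Φ) from
    DFunLike.congr_fun this P
  refine algHom_ext fun i => ?_
  fin_cases i <;> simp [Φ, p_mkA, q_apply]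

lemma exists_mkA_linear (a : A1) :
    ∃ u v : MvPolynomial (Fin 3) ℚ, a = mkA (rename Fin.castSucc v * X 3 + rename Fin.castSucc u) := by
  obtain ⟨z, rfl⟩ := Ideal.Quotient.mkₐ_surjective ℚ (Ideal.span {relA}) a
  obtain ⟨h, u, v, hz⟩ := exists_eq_mul_add_linear_last lastEquiv_relA z
  refine ⟨u, v, ?_⟩
  rw [← mkA, hz, map_add, map_mul, mkA_eq_zero_iff.2 dvd_rfl, zero_mul, zero_add]
  rfl

lemma le_range_Φ : F ≤ Φ.toRingHom.range := by
  rintro ⟨a, c⟩ (hac : p a = q c)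
  obtain ⟨u, v, rfl⟩ := exists_mkA_linear a
  rw [p_mkA_linear, q_apply, ← sub_eq_zero, ← map_sub, mkB_eq_zero_iff, add_sub_assoc,
    ← map_sub] at hac
  obtain ⟨hu, hv⟩ := eq_zero_of_dvd_linear_last lastEquiv_relB hac
  obtain ⟨w, rfl⟩ := X_last_dvd_of_zeroLast_eq_zero hv
  refine ⟨rename Fin.castSucc w * X 3 + rename Fin.castSucc u, ?_⟩
  change Φ _ = _
  rw [Φ_linear, mul_comm w, sub_eq_zero.1 hu]
  rfl

lemma range_Φ : Φ.toRingHom.range = F :=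
  le_antisymm range_Φ_le le_range_Φ

lemma ker_Φ : RingHom.ker Φ = Ideal.span {relF} := by
  refine le_antisymm (fun P hP => ?_) (Ideal.span_le.2 (Set.singleton_subset_iff.2 Φ_relF))
  obtain ⟨h, u, v, rfl⟩ : ∃ h u v,
      P = relF * h + (rename Fin.castSucc v * X 3 + rename Fin.castSucc u) :=
    exists_eq_mul_add_linear_last lastEquiv_relF P
  have hA : relA ∣ rename Fin.castSucc (v * X 2) * X 3 + rename Fin.castSucc u := by
    rw [RingHom.mem_ker, map_add, map_mul, Φ_relF, zero_mul, zero_add, Φ_linear] at hP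
    exact mkA_eq_zero_iff.1 (congrArg Prod.fst hP)
  obtain ⟨rfl, hv⟩ := eq_zero_of_dvd_linear_last lastEquiv_relA hA
  obtain rfl : v = 0 := (mul_eq_zero.1 hv).resolve_right (X_ne_zero _)
  simp [Ideal.mem_span_singleton]

/-- `Φ` lands in the fiber product `A₁ ×_B C`, is surjective onto it, and its kernel
is the principal ideal generated by `Q² + G²(2K₂ + K₁²)(K₁² − 4G)`; hence
`A₁ ×_B C ≅ ℚ[K₁, K₂, G, Q]/(Q² + G²(2K₂ + K₁²)(K₁² − 4G))`. -/
theorem stmt7 :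
    Φ.toRingHom.range = F ∧
    RingHom.ker Φ =
      Ideal.span ({X 3 ^ 2 + X 2 ^ 2 * (2 * X 1 + X 0 ^ 2) * (X 0 ^ 2 - 4 * X 2)} :
        Set (MvPolynomial (Fin 4) ℚ)) ∧
    Nonempty
      (F ≃+* (MvPolynomial (Fin 4) ℚ ⧸
        Ideal.span ({X 3 ^ 2 + X 2 ^ 2 * (2 * X 1 + X 0 ^ 2) * (X 0 ^ 2 - 4 * X 2)} :
          Set (MvPolynomial (Fin 4) ℚ)))) := by
  refine ⟨range_Φ, ker_Φ, ⟨(RingEquiv.subringCongr range_Φ.symm).trans ?_⟩⟩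
  exact (RingHom.quotientKerEquivRange Φ.toRingHom).symm.trans (Ideal.quotEquivOfEq ker_Φ)

end Stmt7
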